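/- If ρ is a separable state on H = H_A ⊗ H_B with operator Schmidt coefficients {μ_a}_{a=1}^{d}, then the product of the Schmidt coefficients satisfies M^[d](|ρ̃|) = Π_{a=1}^{d} μ_a ≤ (1/d)^d. -/

import Mathlib

open scoped Kronecker ComplexOrder
open Matrix Finset

/-- Hilbert-Schmidt inner product on matrices. -/
noncomputable def hsInner {n : Type*} [Fintype n] (A B : Matrix n n ℂ) : ℂ :=
  (Aᴴ * B).trace

/-- Hilbert-Schmidt norm. -/
noncomputable def hsNorm {n : Type*} [Fintype n] (A : Matrix n n ℂ) : ℝ :=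
  Real.sqrt (hsInner A A).re

/-- A density operator: positive semidefinite with unit trace. -/
def IsDensity {n : Type*} [Fintype n] (ρ : Matrix n n ℂ) : Prop :=
  ρ.PosSemidef ∧ ρ.trace = 1

/-- A separable bipartite state: a convex combination of product density operators. -/
def IsSeparableState {NA NB : ℕ} (ρ : Matrix (Fin NA × Fin NB) (Fin NA × Fin NB) ℂ) : Prop :=
  ∃ (m : ℕ) (p : Fin m → ℝ)
    (ρA : Fin m → Matrix (Fin NA) (Fin NA) ℂ) (ρB : Fin m → Matrix (Fin NB) (Fin NB) ℂ),
    (∀ i, 0 < p i) ∧ (∑ i, p i = 1) ∧ (∀ i, IsDensity (ρA i)) ∧ (∀ i, IsDensity (ρB i)) ∧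
    ρ = ∑ i, (p i : ℂ) • (ρA i ⊗ₖ ρB i)

/-- An operator Schmidt decomposition of a bipartite operator `C`:
`C = ∑ a, μ a • (E a ⊗ₖ F a)` with `μ a ≥ 0` and `E`, `F` orthonormal families
with respect to the Hilbert-Schmidt inner product. -/
def SchmidtDecomp {NA NB : ℕ} (C : Matrix (Fin NA × Fin NB) (Fin NA × Fin NB) ℂ)
    (μ : Fin (min (NA ^ 2) (NB ^ 2)) → ℝ)
    (E : Fin (min (NA ^ 2) (NB ^ 2)) → Matrix (Fin NA) (Fin NA) ℂ)
    (F : Fin (min (NA ^ 2) (NB ^ 2)) → Matrix (Fin NB) (Fin NB) ℂ) : Prop :=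
  (∀ a, 0 ≤ μ a) ∧
  (∀ a b, hsInner (E a) (E b) = if a = b then 1 else 0) ∧
  (∀ a b, hsInner (F a) (F b) = if a = b then 1 else 0) ∧
  C = ∑ a, (μ a : ℂ) • (E a ⊗ₖ F a)

/-! Each Schmidt coefficient is recovered as `μ a = ⟨E a ⊗ F a, ρ⟩`. For a product of density
matrices `σ ⊗ τ`, Cauchy–Schwarz and Bessel's inequality give
`∑ a |⟨E a, σ⟩| |⟨F a, τ⟩| ≤ ‖σ‖ ‖τ‖ ≤ 1` in the Hilbert–Schmidt norm, because
`tr σ² = ∑ λᵢ² ≤ (∑ λᵢ)² = 1` for the eigenvalues of a density matrix. The triangle inequality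
carries this over to convex combinations, so `∑ a μ a ≤ 1` for separable `ρ` (the realignment
criterion), and AM–GM turns this into `∏ a μ a ≤ (1 / d) ^ d`. -/

section HilbertSchmidt

variable {n m : Type*} [Fintype n] [Fintype m]

lemma hsInner_sum {ι : Type*} (s : Finset ι) (A : Matrix n n ℂ) (B : ι → Matrix n n ℂ) :
    hsInner A (∑ i ∈ s, B i) = ∑ i ∈ s, hsInner A (B i) := by
  simp [hsInner, Matrix.mul_sum]

lemma hsInner_smul (A B : Matrix n n ℂ) (c : ℂ) : hsInner A (c • B) = c * hsInner A B := by
  simp [hsInner]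

lemma hsInner_kronecker (A C : Matrix n n ℂ) (B D : Matrix m m ℂ) :
    hsInner (A ⊗ₖ B) (C ⊗ₖ D) = hsInner A C * hsInner B D := by
  rw [hsInner, conjTranspose_kronecker, ← mul_kronecker_mul, trace_kronecker, hsInner, hsInner]

noncomputable def Matrix.toEuclideanSpace (A : Matrix n n ℂ) : EuclideanSpace ℂ (n × n) :=
  WithLp.toLp 2 fun p => A p.1 p.2

lemma Matrix.inner_toEuclideanSpace (A B : Matrix n n ℂ) :
    inner ℂ A.toEuclideanSpace B.toEuclideanSpace = hsInner A B := by
  simp only [toEuclideanSpace, PiLp.inner_apply, hsInner, trace, Matrix.diag, mul_apply,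
    conjTranspose_apply, RCLike.inner_apply, Fintype.sum_prod_type]
  rw [Finset.sum_comm]
  simp [mul_comm]

lemma Matrix.IsHermitian.trace_mul_self [DecidableEq n] {A : Matrix n n ℂ} (hA : A.IsHermitian) :
    (A * A).trace = ∑ i, ((hA.eigenvalues i ^ 2 : ℝ) : ℂ) := by
  conv_lhs => rw [hA.spectral_theorem, ← map_mul, Unitary.conjStarAlgAut_apply, trace_mul_cycle,
    Unitary.coe_star_mul_self, one_mul, diagonal_mul_diagonal, trace_diagonal]
  simp [sq]

lemma IsDensity.re_hsInner_self_le_one {ρ : Matrix n n ℂ} (hρ : IsDensity ρ) :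
    (hsInner ρ ρ).re ≤ 1 := by
  classical
  obtain ⟨hpos, htr⟩ := hρ
  have hsum : ∑ i, hpos.isHermitian.eigenvalues i = 1 := by
    simpa [htr] using congrArg Complex.re hpos.isHermitian.trace_eq_sum_eigenvalues.symm
  calc (hsInner ρ ρ).re = ∑ i, hpos.isHermitian.eigenvalues i ^ 2 := by
        rw [hsInner, hpos.isHermitian.eq, hpos.isHermitian.trace_mul_self]; norm_cast
    _ ≤ (∑ i, hpos.isHermitian.eigenvalues i) ^ 2 :=
        sum_sq_le_sq_sum_of_nonneg fun i _ => hpos.eigenvalues_nonneg i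
    _ = 1 := by rw [hsum, one_pow]

end HilbertSchmidt

section Bessel

variable {n m ι : Type*} [Fintype n] [Fintype m] [DecidableEq ι]

lemma orthonormal_toEuclideanSpace {E : ι → Matrix n n ℂ}
    (hE : ∀ a b, hsInner (E a) (E b) = if a = b then 1 else 0) :
    Orthonormal ℂ fun a => (E a).toEuclideanSpace := by
  rw [orthonormal_iff_ite]
  intro a b
  rw [inner_toEuclideanSpace, hE]

lemma IsDensity.sum_norm_hsInner_sq_le_one [Fintype ι] {E : ι → Matrix n n ℂ}
    (hE : ∀ a b, hsInner (E a) (E b) = if a = b then 1 else 0) {ρ : Matrix n n ℂ}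
    (hρ : IsDensity ρ) : ∑ a, ‖hsInner (E a) ρ‖ ^ 2 ≤ 1 := by
  have hnorm : ‖ρ.toEuclideanSpace‖ ^ 2 ≤ 1 := by
    rw [← inner_self_eq_norm_sq (𝕜 := ℂ), inner_toEuclideanSpace]
    exact hρ.re_hsInner_self_le_one
  simp_rw [← inner_toEuclideanSpace]
  exact ((orthonormal_toEuclideanSpace hE).sum_inner_products_le _).trans hnorm

lemma IsDensity.sum_norm_hsInner_mul_le_one [Fintype ι]
    {E : ι → Matrix n n ℂ} {F : ι → Matrix m m ℂ}
    (hE : ∀ a b, hsInner (E a) (E b) = if a = b then 1 else 0)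
    (hF : ∀ a b, hsInner (F a) (F b) = if a = b then 1 else 0)
    {σ : Matrix n n ℂ} {τ : Matrix m m ℂ} (hσ : IsDensity σ) (hτ : IsDensity τ) :
    ∑ a, ‖hsInner (E a) σ‖ * ‖hsInner (F a) τ‖ ≤ 1 := by
  calc ∑ a, ‖hsInner (E a) σ‖ * ‖hsInner (F a) τ‖
      ≤ √(∑ a, ‖hsInner (E a) σ‖ ^ 2) * √(∑ a, ‖hsInner (F a) τ‖ ^ 2) :=
        Real.sum_mul_le_sqrt_mul_sqrt _ _ _
    _ ≤ √1 * √1 := by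
        gcongr
        exacts [hσ.sum_norm_hsInner_sq_le_one hE, hτ.sum_norm_hsInner_sq_le_one hF]
    _ = 1 := by simp

end Bessel

lemma IsSeparableState.sum_norm_hsInner_kronecker_le_one {NA NB : ℕ} {ι : Type*} [Fintype ι]
    [DecidableEq ι] {ρ : Matrix (Fin NA × Fin NB) (Fin NA × Fin NB) ℂ} (hρ : IsSeparableState ρ)
    {E : ι → Matrix (Fin NA) (Fin NA) ℂ} {F : ι → Matrix (Fin NB) (Fin NB) ℂ}
    (hE : ∀ a b, hsInner (E a) (E b) = if a = b then 1 else 0)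
    (hF : ∀ a b, hsInner (F a) (F b) = if a = b then 1 else 0) :
    ∑ a, ‖hsInner (E a ⊗ₖ F a) ρ‖ ≤ 1 := by
  obtain ⟨k, p, ρA, ρB, hp, hp_sum, hρA, hρB, rfl⟩ := hρ
  have hterm (a : ι) (i : Fin k) :
      ‖hsInner (E a ⊗ₖ F a) ((p i : ℂ) • (ρA i ⊗ₖ ρB i))‖ =
        p i * (‖hsInner (E a) (ρA i)‖ * ‖hsInner (F a) (ρB i)‖) := by
    rw [hsInner_smul, hsInner_kronecker, norm_mul, norm_mul, Complex.norm_real,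
      Real.norm_of_nonneg (hp i).le]
  calc ∑ a, ‖hsInner (E a ⊗ₖ F a) (∑ i, (p i : ℂ) • (ρA i ⊗ₖ ρB i))‖
      ≤ ∑ a, ∑ i, p i * (‖hsInner (E a) (ρA i)‖ * ‖hsInner (F a) (ρB i)‖) := by
        gcongr with a
        rw [hsInner_sum]
        exact (norm_sum_le _ _).trans_eq (sum_congr rfl fun i _ => hterm a i)
    _ = ∑ i, p i * ∑ a, ‖hsInner (E a) (ρA i)‖ * ‖hsInner (F a) (ρB i)‖ := by
        rw [sum_comm]; simp_rw [mul_sum]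
    _ ≤ ∑ i, p i * 1 := by
        gcongr with i
        · exact (hp i).le
        · exact (hρA i).sum_norm_hsInner_mul_le_one hE hF (hρB i)
    _ = 1 := by simpa using hp_sum

lemma SchmidtDecomp.hsInner_kronecker_eq {NA NB : ℕ}
    {C : Matrix (Fin NA × Fin NB) (Fin NA × Fin NB) ℂ} {μ : Fin (min (NA ^ 2) (NB ^ 2)) → ℝ}
    {E : Fin (min (NA ^ 2) (NB ^ 2)) → Matrix (Fin NA) (Fin NA) ℂ}
    {F : Fin (min (NA ^ 2) (NB ^ 2)) → Matrix (Fin NB) (Fin NB) ℂ} (hS : SchmidtDecomp C μ E F)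
    (a : Fin (min (NA ^ 2) (NB ^ 2))) :
    hsInner (E a ⊗ₖ F a) C = μ a := by
  obtain ⟨-, hE, hF, rfl⟩ := hS
  rw [hsInner_sum, sum_eq_single a]
  · rw [hsInner_smul, hsInner_kronecker, hE, hF]
    simp
  · intro b _ hba
    rw [hsInner_smul, hsInner_kronecker, hE, hF]
    simp [hba.symm]
  · simp

theorem Real.prod_le_arith_mean_pow {ι : Type*} (s : Finset ι) {z : ι → ℝ}
    (hz : ∀ i ∈ s, 0 ≤ z i) :
    ∏ i ∈ s, z i ≤ ((∑ i ∈ s, z i) / #s) ^ #s := by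
  rcases s.eq_empty_or_nonempty with rfl | hs
  · simp
  have hcard : (0 : ℝ) < #s := by exact_mod_cast hs.card_pos
  have amgm := Real.geom_mean_le_arith_mean s (fun _ => 1) z (fun _ _ => zero_le_one)
    (by simpa using hcard) hz
  simp only [Real.rpow_one, sum_const, nsmul_eq_mul, mul_one, one_mul] at amgm
  calc ∏ i ∈ s, z i = ((∏ i ∈ s, z i) ^ ((#s : ℝ)⁻¹)) ^ #s :=
        (Real.rpow_inv_natCast_pow (prod_nonneg hz) hs.card_pos.ne').symm
    _ ≤ ((∑ i ∈ s, z i) / #s) ^ #s := by gcongr; exact Real.rpow_nonneg (prod_nonneg hz) _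

theorem stmt9_product_schmidt_coefficients_bound_general {NA NB : ℕ}
    (ρ : Matrix (Fin NA × Fin NB) (Fin NA × Fin NB) ℂ)
    (hsep : IsSeparableState ρ)
    (μ : Fin (min (NA ^ 2) (NB ^ 2)) → ℝ)
    (E : Fin (min (NA ^ 2) (NB ^ 2)) → Matrix (Fin NA) (Fin NA) ℂ)
    (F : Fin (min (NA ^ 2) (NB ^ 2)) → Matrix (Fin NB) (Fin NB) ℂ)
    (hS : SchmidtDecomp ρ μ E F) :
    ∏ a, μ a ≤ (1 / (min (NA ^ 2) (NB ^ 2) : ℝ)) ^ (min (NA ^ 2) (NB ^ 2)) := by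
  have hμ_sum : ∑ a, μ a ≤ 1 := by
    have h := hsep.sum_norm_hsInner_kronecker_le_one hS.2.1 hS.2.2.1
    simpa only [hS.hsInner_kronecker_eq, Complex.norm_real, Real.norm_of_nonneg (hS.1 _)] using h
  calc ∏ a, μ a ≤ ((∑ a, μ a) / #(univ : Finset (Fin (min (NA ^ 2) (NB ^ 2))))) ^ _ :=
        Real.prod_le_arith_mean_pow _ fun a _ => hS.1 a
    _ ≤ (1 / (min (NA ^ 2) (NB ^ 2) : ℝ)) ^ (min (NA ^ 2) (NB ^ 2)) := by
        rw [card_univ, Fintype.card_fin]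
        push_cast
        gcongr
        exact div_nonneg (sum_nonneg fun a _ => hS.1 a) (by positivity)

/-- For a separable state, the product of the Schmidt coefficients is at most (1/d)^d. -/
theorem stmt9_product_schmidt_coefficients_bound {NA NB : ℕ} (hA : 2 ≤ NA) (hB : 2 ≤ NB)
    (ρ : Matrix (Fin NA × Fin NB) (Fin NA × Fin NB) ℂ)
    (hsep : IsSeparableState ρ)
    (μ : Fin (min (NA ^ 2) (NB ^ 2)) → ℝ)
    (E : Fin (min (NA ^ 2) (NB ^ 2)) → Matrix (Fin NA) (Fin NA) ℂ)
    (F : Fin (min (NA ^ 2) (NB ^ 2)) → Matrix (Fin NB) (Fin NB) ℂ)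
    (hS : SchmidtDecomp ρ μ E F) :
    ∏ a, μ a ≤ (1 / (min (NA ^ 2) (NB ^ 2) : ℝ)) ^ (min (NA ^ 2) (NB ^ 2)) :=
  stmt9_product_schmidt_coefficients_bound_general ρ hsep μ E F hS
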